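/- arXiv:2307.13396 — 3 statements merged into one kernel-verified Lean document; each statement's English description precedes it below -/
import Mathlib

section
/- If R ⊆ U is an Even-trap in U (with respect to the edges restricted to U), then the Odd safe-reachability set SafeReach_Odd(U, R), defined as the least fixed point of X ↦ U ∩ (R ∪ Cpre_Odd(X)), is also an Even-trap in U. -/
open Set

def preE {V : Type*} (VP : Set V) (E : V → Set V) (S : Set V) : Set V :=
  {v | v ∈ VP ∧ (E v ∩ S).Nonempty}

def preA {V : Type*} (VP : Set V) (E : V → Set V) (S : Set V) : Set V :=
  {v | v ∈ VP ∧ E v ⊆ S}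

def cpre {V : Type*} (VP VQ : Set V) (E : V → Set V) (S : Set V) : Set V :=
  preE VP E S ∪ preA VQ E S

def muSet {V : Type*} (f : Set V → Set V) : Set V := sInf {S | f S ⊆ S}

/-- If `R ⊆ U` is an Even-trap in `U`, then `SafeReach_Odd(U, R)` is an Even-trap in `U`. -/
theorem stmt8 {V : Type*} [Fintype V]
    (VE VO : Set V) (E : V → Set V)
    (hcover : VE ∪ VO = Set.univ) (hdisj : Disjoint VE VO)
    (hE : ∀ v, (E v).Nonempty)
    (U R : Set V) (hRU : R ⊆ U)
    (htrap1 : ∀ v ∈ R ∩ VE, E v ∩ U ⊆ R)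
    (htrap2 : ∀ v ∈ R ∩ VO, ∃ w ∈ E v, w ∈ R)
    (W : Set V)
    (hW : W = muSet (fun X => U ∩ (R ∪ cpre VO VE E X))) :
    (∀ v ∈ W ∩ VE, E v ∩ U ⊆ W) ∧ (∀ v ∈ W ∩ VO, ∃ w ∈ E v, w ∈ W) := by
  set f : Set V → Set V := fun X => U ∩ (R ∪ cpre VO VE E X) with hf
  have mono : ∀ X Y : Set V, X ⊆ Y → f X ⊆ f Y := by
    intro X Y h v hv
    refine ⟨hv.1, ?_⟩
    rcases hv.2 with hr | hc
    · exact Or.inl hr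
    · refine Or.inr ?_
      rcases hc with ⟨hvo, w, hw⟩ | ⟨hve, hsub⟩
      · exact Or.inl ⟨hvo, w, hw.1, h hw.2⟩
      · exact Or.inr ⟨hve, fun x hx => h (hsub hx)⟩
  have hWS : ∀ S, f S ⊆ S → W ⊆ S := by
    intro S hS
    rw [hW]
    exact sInf_le hS
  have hpre : f W ⊆ W := by
    rw [hW]
    exact le_sInf fun S hS => (mono _ S (sInf_le hS)).trans hS
  have hRW : R ⊆ W := by
    rw [hW]
    exact le_sInf fun S hS r hr => hS ⟨hRU hr, Or.inl hr⟩
  have hWf : W ⊆ f W := hWS _ (mono _ _ hpre)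
  constructor
  · rintro v ⟨hvW, hvE⟩ x ⟨hx, hxU⟩
    rcases (hWf hvW).2 with hr | hc
    · exact hRW (htrap1 v ⟨hr, hvE⟩ ⟨hx, hxU⟩)
    · rcases hc with ⟨hvO, _⟩ | ⟨_, hsub⟩
      · exact absurd hvO (Set.disjoint_left.1 hdisj hvE)
      · exact hsub hx
  · rintro v ⟨hvW, hvO⟩
    rcases (hWf hvW).2 with hr | hc
    · obtain ⟨w, hw, hwR⟩ := htrap2 v ⟨hr, hvO⟩
      exact ⟨w, hw, hRW hwR⟩
    · rcases hc with ⟨_, w, hw1, hw2⟩ | ⟨hvE, _⟩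
      · exact ⟨w, hw1, hw2⟩
      · exact absurd hvO (Set.disjoint_left.1 hdisj hvE)
end

section
/- In a strategy-template subgraph, a minimal cycle cannot have even maximal priority: if δ = w_1 w_2 … w_m w_1 is a cycle along which, for every edge (w_i, w_{i+1}), rank(w_i) ≥_{l+1−χ(w_i)} rank(w_{i+1}) holds in the lexicographic order restricted to the first l+1−χ(w_i) components, with the inequality strict whenever χ(w_i) is even, then the maximal priority max_i χ(w_i) occurring on δ is odd. -/
open Set

/-- Strict lexicographic comparison of tuples restricted to the first `b'` coordinates. -/
def lexLt (l b' : ℕ) (a b : Fin l → ℕ) : Prop :=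
  ∃ i : Fin l, (i : ℕ) < b' ∧ (∀ j : Fin l, j < i → a j = b j) ∧ a i < b i

/-- Non-strict lexicographic comparison `a ≥_{b'} b` restricted to the first `b'`
coordinates (the negation of the strict comparison `a <_{b'} b`). -/
def lexGe (l b' : ℕ) (a b : Fin l → ℕ) : Prop := ¬ lexLt l b' a b

/-- Truncation of a tuple to its first `k` coordinates, viewed in the lex order. -/
noncomputable def trunc (l k : ℕ) (a : Fin l → ℕ) : Lex (Fin l → ℕ) :=
  toLex fun i => if (i : ℕ) < k then a i else 0

lemma lexLt_iff_trunc (l k : ℕ) (a b : Fin l → ℕ) :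
    lexLt l k a b ↔ trunc l k a < trunc l k b := by
  constructor
  · rintro ⟨i, hik, hpre, hlt⟩
    refine ⟨i, fun j hj => ?_, ?_⟩
    · have hjk : (j : ℕ) < k := lt_trans hj hik
      simp only [trunc, Pi.toLex_apply, if_pos hjk, hpre j hj]
    · simp only [trunc, Pi.toLex_apply, if_pos hik]
      exact hlt
  · rintro ⟨i, hpre, hlt⟩
    simp only [trunc, Pi.toLex_apply] at hlt hpre
    by_cases hik : (i : ℕ) < k
    · refine ⟨i, hik, fun j hj => ?_, ?_⟩
      · have hjk : (j : ℕ) < k := lt_trans hj hik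
        have := hpre j hj
        simpa [if_pos hjk] using this
      · simpa [if_pos hik] using hlt
    · simp [if_neg hik] at hlt

/-- If `a ≥_k b` then the truncations compare as `trunc b ≤ trunc a` in the lex order. -/
lemma lexGe_trunc_le (l k : ℕ) (a b : Fin l → ℕ) (h : lexGe l k a b) :
    trunc l k b ≤ trunc l k a := by
  by_cases heq : ∀ i : Fin l, (i : ℕ) < k → a i = b i
  · refine le_of_eq ?_
    have hfe : (fun i : Fin l => if (i : ℕ) < k then b i else 0) =
        (fun i : Fin l => if (i : ℕ) < k then a i else 0) := by
      funext i
      by_cases hik : (i : ℕ) < k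
      · simp [if_pos hik, heq i hik]
      · simp [if_neg hik]
    simpa [trunc] using congrArg toLex hfe
  · push_neg at heq
    obtain ⟨i0, hi0k, hi0ne⟩ := heq
    obtain ⟨i, hi, hmin⟩ := Finset.exists_min_image
      (Finset.univ.filter fun i : Fin l => (i : ℕ) < k ∧ a i ≠ b i) id
      ⟨i0, by simp [hi0k, hi0ne]⟩
    simp only [Finset.mem_filter, Finset.mem_univ, true_and] at hi
    have hpre : ∀ j : Fin l, j < i → a j = b j := by
      intro j hj
      by_contra hne
      have hjk : (j : ℕ) < k := lt_trans hj hi.1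
      have := hmin j (by simp [hjk, hne])
      exact absurd (lt_of_lt_of_le hj this) (lt_irrefl j)
    rcases lt_trichotomy (a i) (b i) with hlt | heq' | hgt
    · exact absurd ⟨i, hi.1, hpre, hlt⟩ h
    · exact absurd heq' hi.2
    · refine le_of_lt ⟨i, fun j hj => ?_, ?_⟩
      · have hjk : (j : ℕ) < k := lt_trans hj hi.1
        simp only [trunc, Pi.toLex_apply, if_pos hjk]
        exact (hpre j hj).symm
      · simp only [trunc, Pi.toLex_apply, if_pos hi.1]
        exact hgt

/-- Monotonicity of `lexLt` in the prefix length. -/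
lemma lexLt_mono (l : ℕ) {k k' : ℕ} (hkk : k ≤ k') {a b : Fin l → ℕ}
    (h : lexLt l k a b) : lexLt l k' a b := by
  obtain ⟨i, hik, hpre, hlt⟩ := h
  exact ⟨i, lt_of_lt_of_le hik hkk, hpre, hlt⟩

/-- A minimal cycle cannot have even maximal priority: along a cycle on which the ranks
descend lexicographically (restricted to the first `l+1−χ(w_i)` coordinates, strictly
at vertices of even priority), the maximal priority is odd. -/
theorem stmt11 {V : Type*} [Fintype V]
    (χ : V → ℕ) (l : ℕ) (hχ : ∀ v, χ v ≤ l)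
    (rank : V → Fin l → ℕ)
    (m : ℕ) (hm : 1 ≤ m) (w : ℕ → V) (hcyc : w m = w 0)
    (hge : ∀ i < m, lexGe l (l + 1 - χ (w i)) (rank (w i)) (rank (w (i + 1))))
    (hstrict : ∀ i < m, Even (χ (w i)) →
      lexLt l (l + 1 - χ (w i)) (rank (w (i + 1))) (rank (w i))) :
    Odd ((Finset.range m).sup fun i => χ (w i)) := by
  by_contra hodd
  rw [Nat.not_odd_iff_even] at hodd
  set b := (Finset.range m).sup fun i => χ (w i) with hb
  -- the sup is attained
  have hne : (Finset.range m).Nonempty := ⟨0, Finset.mem_range.mpr hm⟩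
  obtain ⟨i0, hi0mem, hi0⟩ := Finset.exists_mem_eq_sup _ hne fun i => χ (w i)
  have hi0m : i0 < m := Finset.mem_range.mp hi0mem
  set k := l + 1 - b with hk
  -- all priorities on the cycle are ≤ b, so k ≤ l + 1 - χ (w i)
  have hkle : ∀ i, i < m → k ≤ l + 1 - χ (w i) := by
    intro i hi
    have : χ (w i) ≤ b := Finset.le_sup (f := fun i => χ (w i)) (Finset.mem_range.mpr hi)
    omega
  set g : ℕ → Lex (Fin l → ℕ) := fun j => trunc l k (rank (w j)) with hg
  -- non-strict steps
  have hstep : ∀ i, i < m → g (i + 1) ≤ g i := by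
    intro i hi
    have h := lexGe_trunc_le l k _ _ fun hl => hge i hi (lexLt_mono l (hkle i hi) hl)
    exact h
  -- chaining non-strict steps
  have hchain : ∀ p q, p ≤ q → q ≤ m → g q ≤ g p := by
    intro p q hpq hqm
    induction q with
    | zero => simpa [Nat.le_zero.mp hpq]
    | succ n ih =>
      rcases Nat.lt_or_ge p (n + 1) with h | h
      · exact le_trans (hstep n (by omega)) (ih (by omega) (by omega))
      · have : p = n + 1 := le_antisymm hpq h
        simp [this]
  -- strict step at i0
  have hstrict0 : g (i0 + 1) < g i0 := by
    have h := hstrict i0 hi0m (hi0 ▸ hodd)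
    rw [← hi0] at h
    exact (lexLt_iff_trunc l k _ _).mp h
  have h1 : g m ≤ g (i0 + 1) := hchain (i0 + 1) m (by omega) le_rfl
  have h2 : g i0 ≤ g 0 := hchain 0 i0 (Nat.zero_le _) (by omega)
  have : g m < g 0 := lt_of_le_of_lt h1 (lt_of_lt_of_le hstrict0 h2)
  rw [hg] at this
  simp only [hcyc] at this
  exact lt_irrefl _ this
end

section
/- If every cycle in a finite directed subgraph passing through a distinguished set M has odd maximal priority, and an infinite path π visits some vertex x ∈ M infinitely often and stays within the subgraph, then the maximal priority among the vertices visited infinitely often by π is odd. -/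
/-!
Let `v ∈ Inf(π)` have maximal priority. Since `V` is finite, `π` eventually stays inside
`Inf(π)`; late enough, the segment of `π` between two visits to `x` around a visit to `v` is
a cycle through `x ∈ M` whose maximal priority is exactly `χ v`, so `χ v` is odd.
-/

open Set Filter

/-- Written `Inf(π)` in the paper. -/
def infOften {V : Type*} (π : ℕ → V) : Set V := {v | ∃ᶠ i in atTop, π i = v}

lemma eventually_mem_infOften {V : Type*} [Finite V] (π : ℕ → V) :
    ∀ᶠ i in atTop, π i ∈ infOften π := by
  have hvisit : ∀ᶠ i in atTop, ∀ v, π i = v → v ∈ infOften π := by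
    refine eventually_all.2 fun v => ?_
    by_cases hv : v ∈ infOften π
    · exact .of_forall fun _ _ => hv
    · exact (not_frequently.1 hv).mono fun _ hi h => absurd h hi
  exact hvisit.mono fun i hi => hi (π i) rfl

lemma exists_cycle_through_of_frequently {V : Type*} {π : ℕ → V} {x v : V}
    (hx : ∃ᶠ i in atTop, π i = x) (hv : ∃ᶠ i in atTop, π i = v) (N : ℕ) :
    ∃ n m j, N ≤ n ∧ j < m ∧ π n = x ∧ π (n + m) = x ∧ π (n + j) = v := by
  obtain ⟨n, hNn, hn⟩ := frequently_atTop.1 hx N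
  obtain ⟨k, hnk, hk⟩ := frequently_atTop.1 hv (n + 1)
  obtain ⟨l, hkl, hl⟩ := frequently_atTop.1 hx (k + 1)
  refine ⟨n, l - n, k - n, hNn, by omega, hn, ?_, ?_⟩
  · rwa [Nat.add_sub_cancel' (by omega)]
  · rwa [Nat.add_sub_cancel' (by omega)]

/-- If every cycle of the subgraph through the set `M` has odd maximal priority, and
an infinite path `π` of the subgraph visits some `x ∈ M` infinitely often, then the
maximal priority among the vertices visited infinitely often by `π` is odd. -/
theorem stmt14 {V : Type*} [Fintype V]
    (E' : V → Set V) (χ : V → ℕ) (M : Set V)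
    (hcycles : ∀ x ∈ M, ∀ m, 1 ≤ m → ∀ p : ℕ → V, p 0 = x → p m = x →
      (∀ i < m, p (i + 1) ∈ E' (p i)) →
      Odd ((Finset.range m).sup fun i => χ (p i)))
    (π : ℕ → V) (hπ : ∀ i, π (i + 1) ∈ E' (π i))
    (x : V) (hx : x ∈ M) (hfreq : ∃ᶠ i in atTop, π i = x) :
    ∃ b, Odd b ∧ (∀ v, (∃ᶠ i in atTop, π i = v) → χ v ≤ b) ∧
      (∃ v, (∃ᶠ i in atTop, π i = v) ∧ χ v = b) := by
  obtain ⟨v, hv, hvmax⟩ :=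
    (infOften π).exists_max_image χ (Set.toFinite _) ⟨x, hfreq⟩
  obtain ⟨N, hN⟩ := eventually_atTop.1 (eventually_mem_infOften π)
  obtain ⟨n, m, j, hNn, hjm, hstart, hend, hvisit⟩ :=
    exists_cycle_through_of_frequently hfreq hv N
  have hodd := hcycles x hx m (by omega) (fun i => π (n + i)) hstart hend
    fun i _ => hπ (n + i)
  have hsup : ((Finset.range m).sup fun i => χ (π (n + i))) = χ v := by
    refine le_antisymm (Finset.sup_le fun i _ => hvmax _ (hN _ (by omega))) ?_
    rw [← hvisit]
    exact Finset.le_sup (f := fun i => χ (π (n + i))) (Finset.mem_range.2 hjm)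
  exact ⟨χ v, hsup ▸ hodd, hvmax, v, hv, rfl⟩
end
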